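/- (Converse Lyapunov theorem for exponential incremental stability.) Suppose f is uniformly L_f-Lipschitz on D and the system x_{k+1} = f(k, x_k) is uniformly exponentially incrementally stable in D with constants d > 0, λ ∈ (0,1). Then there exist a function V : ℕ → ℝⁿ → ℝⁿ → ℝ and constants c₁, c₂, c₃ > 0 and β ∈ (0,1) such that for all ξ, ζ, ξ̃, ζ̃ ∈ D and all k: (a) c₁‖ξ − ζ‖² ≤ V(k, ξ, ζ) ≤ c₂‖ξ − ζ‖²; (b) V(k+1, f(k, ξ), f(k, ζ)) ≤ β² V(k, ξ, ζ); (c) |V(k, ξ, ζ) − V(k, ξ̃, ζ̃)| ≤ c₃ (‖ξ − ξ̃‖ + ‖ζ − ζ̃‖)(‖ξ − ζ‖ + ‖ξ̃ − ζ̃‖). -/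

import Mathlib

/-!
The Lyapunov function is `V k ξ ζ = ∑_{j < N} dist (x_{k+j}) (y_{k+j}) ^ 2`, where `x`, `y` are the
solutions from `ξ`, `ζ` at time `k`. Stability bounds every term by `C² dist ξ ζ ²` (with
`C = max d 1`), which gives the upper bound and, via `|a² - b²| = |a - b| (a + b)`, the Lipschitz
estimate; the term `j = 0` gives the lower bound. Advancing one step along both solutions drops the
term `dist ξ ζ ²` and adds the term `j = N`, which is at most half of it once `(C λ^N)² ≤ 1/2`; so
`V` decreases by at least `dist ξ ζ ² / 2 ≥ V / (2 N C²)`.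
-/

open Finset Filter Topology

lemma abs_dist_sq_sub_dist_sq_le {α : Type*} [PseudoMetricSpace α] (x y x' y' : α) :
    |dist x y ^ 2 - dist x' y' ^ 2| ≤ (dist x x' + dist y y') * (dist x y + dist x' y') := by
  rw [sq_sub_sq, abs_mul, abs_of_nonneg (by positivity), mul_comm]
  exact mul_le_mul_of_nonneg_right (dist_dist_dist_le x y x' y') (by positivity)

lemma exists_pos_sq_mul_pow_le_half (C : ℝ) {lam : ℝ} (hlam0 : 0 ≤ lam) (hlam1 : lam < 1) :
    ∃ N : ℕ, 0 < N ∧ (C * lam ^ N) ^ 2 ≤ 1 / 2 := by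
  have hlim : Tendsto (fun N : ℕ => (C * lam ^ N) ^ 2) atTop (𝓝 0) := by
    simpa using ((tendsto_pow_atTop_nhds_zero_of_lt_one hlam0 hlam1).const_mul C).pow 2
  obtain ⟨N, hN, hpos⟩ := ((hlim.eventually (ge_mem_nhds (by norm_num : (0:ℝ) < 1 / 2))).and
    (eventually_gt_atTop 0)).exists
  exact ⟨N, hpos, hN⟩

variable {α : Type*}

/-- `trajectory f k ξ m` is the state at time `k + m` of the solution of `x (j + 1) = f j (x j)`
starting from `ξ` at time `k`. -/
def trajectory (f : ℕ → α → α) (k : ℕ) (ξ : α) : ℕ → α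
  | 0 => ξ
  | m + 1 => f (k + m) (trajectory f k ξ m)

section trajectory

variable {f : ℕ → α → α} {k : ℕ} {ξ : α}

@[simp] lemma trajectory_zero : trajectory f k ξ 0 = ξ := rfl

lemma trajectory_succ (m : ℕ) : trajectory f k ξ (m + 1) = f (k + m) (trajectory f k ξ m) := rfl

lemma trajectory_succ_map (j : ℕ) : trajectory f (k + 1) (f k ξ) j = trajectory f k ξ (j + 1) := by
  induction j with
  | zero => rfl
  | succ j ih => rw [trajectory_succ, ih, trajectory_succ (j + 1), Nat.add_right_comm, add_assoc]

lemma trajectory_sub_succ {j : ℕ} (hj : k ≤ j) :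
    trajectory f k ξ (j + 1 - k) = f j (trajectory f k ξ (j - k)) := by
  rw [Nat.sub_add_comm hj, trajectory_succ, Nat.add_sub_cancel' hj]

end trajectory

section stability

variable [PseudoMetricSpace α]

def IsExpIncrementallyStable (f : ℕ → α → α) (D : Set α) (d lam : ℝ) : Prop :=
  ∀ (k₀ : ℕ) (x y : ℕ → α), x k₀ ∈ D → y k₀ ∈ D →
    (∀ k, k₀ ≤ k → x (k + 1) = f k (x k)) → (∀ k, k₀ ≤ k → y (k + 1) = f k (y k)) →
    ∀ k, k₀ ≤ k → dist (x k) (y k) ≤ d * dist (x k₀) (y k₀) * lam ^ (k - k₀)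

namespace IsExpIncrementallyStable

variable {f : ℕ → α → α} {D : Set α} {d lam : ℝ}

lemma mono (h : IsExpIncrementallyStable f D d lam) {d' : ℝ} (hd : d ≤ d')
    (hlam : 0 ≤ lam) : IsExpIncrementallyStable f D d' lam :=
  fun k₀ x y hx hy hxs hys k hk => (h k₀ x y hx hy hxs hys k hk).trans (by gcongr)

lemma dist_trajectory_le (h : IsExpIncrementallyStable f D d lam) {ξ ζ : α} (hξ : ξ ∈ D)
    (hζ : ζ ∈ D) (k m : ℕ) :
    dist (trajectory f k ξ m) (trajectory f k ζ m) ≤ d * dist ξ ζ * lam ^ m := by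
  simpa using h k (fun i => trajectory f k ξ (i - k)) (fun i => trajectory f k ζ (i - k))
    (by simpa) (by simpa) (fun _ => trajectory_sub_succ) (fun _ => trajectory_sub_succ)
    (k + m) (by omega)

lemma dist_trajectory_le_mul (h : IsExpIncrementallyStable f D d lam) (hd : 0 ≤ d)
    (hlam0 : 0 ≤ lam) (hlam1 : lam ≤ 1) {ξ ζ : α} (hξ : ξ ∈ D) (hζ : ζ ∈ D) (k m : ℕ) :
    dist (trajectory f k ξ m) (trajectory f k ζ m) ≤ d * dist ξ ζ :=
  (h.dist_trajectory_le hξ hζ k m).trans <|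
    mul_le_of_le_one_right (by positivity) (pow_le_one₀ hlam0 hlam1)

lemma sq_dist_trajectory_le_half (h : IsExpIncrementallyStable f D d lam) {m : ℕ}
    (hm : (d * lam ^ m) ^ 2 ≤ 1 / 2) {ξ ζ : α} (hξ : ξ ∈ D) (hζ : ζ ∈ D) (k : ℕ) :
    dist (trajectory f k ξ m) (trajectory f k ζ m) ^ 2 ≤ dist ξ ζ ^ 2 / 2 :=
  calc dist (trajectory f k ξ m) (trajectory f k ζ m) ^ 2
      ≤ (d * dist ξ ζ * lam ^ m) ^ 2 :=
        pow_le_pow_left₀ dist_nonneg (h.dist_trajectory_le hξ hζ k m) 2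
    _ = (d * lam ^ m) ^ 2 * dist ξ ζ ^ 2 := by ring
    _ ≤ 1 / 2 * dist ξ ζ ^ 2 := by gcongr
    _ = dist ξ ζ ^ 2 / 2 := by ring

end IsExpIncrementallyStable

end stability

section lyapunov

variable [PseudoMetricSpace α]

def incrementalLyapunov (f : ℕ → α → α) (N k : ℕ) (ξ ζ : α) : ℝ :=
  ∑ j ∈ range N, dist (trajectory f k ξ j) (trajectory f k ζ j) ^ 2

variable {f : ℕ → α → α} {N k : ℕ} {ξ ζ : α}

lemma sq_dist_le_incrementalLyapunov (hN : 0 < N) :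
    dist ξ ζ ^ 2 ≤ incrementalLyapunov f N k ξ ζ :=
  single_le_sum (f := fun j => dist (trajectory f k ξ j) (trajectory f k ζ j) ^ 2)
    (fun _ _ => by positivity) (mem_range.2 hN)

lemma incrementalLyapunov_le {C : ℝ}
    (h : ∀ j, dist (trajectory f k ξ j) (trajectory f k ζ j) ≤ C * dist ξ ζ) :
    incrementalLyapunov f N k ξ ζ ≤ N * C ^ 2 * dist ξ ζ ^ 2 := by
  calc incrementalLyapunov f N k ξ ζ ≤ ∑ _j ∈ range N, (C * dist ξ ζ) ^ 2 :=
        sum_le_sum fun j _ => pow_le_pow_left₀ dist_nonneg (h j) 2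
    _ = N * C ^ 2 * dist ξ ζ ^ 2 := by rw [sum_const, card_range, nsmul_eq_mul]; ring

lemma incrementalLyapunov_succ_map :
    incrementalLyapunov f N (k + 1) (f k ξ) (f k ζ) = incrementalLyapunov f N k ξ ζ
      + dist (trajectory f k ξ N) (trajectory f k ζ N) ^ 2 - dist ξ ζ ^ 2 := by
  have hsplit := sum_range_succ' (fun j => dist (trajectory f k ξ j) (trajectory f k ζ j) ^ 2) N
  simp only [sum_range_succ, trajectory_zero] at hsplit
  simp only [incrementalLyapunov, trajectory_succ_map]
  linarith

lemma incrementalLyapunov_succ_map_le {c : ℝ} (hc : 0 < c)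
    (hV : incrementalLyapunov f N k ξ ζ ≤ c * dist ξ ζ ^ 2)
    (hN : dist (trajectory f k ξ N) (trajectory f k ζ N) ^ 2 ≤ dist ξ ζ ^ 2 / 2) :
    incrementalLyapunov f N (k + 1) (f k ξ) (f k ζ) ≤
      (1 - 1 / (2 * c)) * incrementalLyapunov f N k ξ ζ := by
  have : incrementalLyapunov f N k ξ ζ / (2 * c) ≤ dist ξ ζ ^ 2 / 2 := by
    rw [div_le_iff₀ (by positivity)]
    linarith
  rw [incrementalLyapunov_succ_map, sub_mul, one_mul, one_div_mul_eq_div]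
  linarith

lemma abs_incrementalLyapunov_sub_le {D : Set α} {C : ℝ}
    (h : ∀ j, ∀ ξ ∈ D, ∀ ζ ∈ D, dist (trajectory f k ξ j) (trajectory f k ζ j) ≤ C * dist ξ ζ)
    {ξ' ζ' : α} (hξ : ξ ∈ D) (hζ : ζ ∈ D) (hξ' : ξ' ∈ D) (hζ' : ζ' ∈ D) :
    |incrementalLyapunov f N k ξ ζ - incrementalLyapunov f N k ξ' ζ'| ≤
      N * C ^ 2 * (dist ξ ξ' + dist ζ ζ') * (dist ξ ζ + dist ξ' ζ') := by
  have hterm : ∀ j, |dist (trajectory f k ξ j) (trajectory f k ζ j) ^ 2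
      - dist (trajectory f k ξ' j) (trajectory f k ζ' j) ^ 2| ≤
        C ^ 2 * (dist ξ ξ' + dist ζ ζ') * (dist ξ ζ + dist ξ' ζ') := fun j => by
    have hX := add_le_add (h j ξ hξ ξ' hξ') (h j ζ hζ ζ' hζ')
    have hY := add_le_add (h j ξ hξ ζ hζ) (h j ξ' hξ' ζ' hζ')
    calc _ ≤ _ := abs_dist_sq_sub_dist_sq_le _ _ _ _
      _ ≤ (C * dist ξ ξ' + C * dist ζ ζ') * (C * dist ξ ζ + C * dist ξ' ζ') :=
          mul_le_mul hX hY (by positivity) ((add_nonneg dist_nonneg dist_nonneg).trans hX)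
      _ = _ := by ring
  calc _ = |∑ j ∈ range N, (dist (trajectory f k ξ j) (trajectory f k ζ j) ^ 2
          - dist (trajectory f k ξ' j) (trajectory f k ζ' j) ^ 2)| := by
        rw [incrementalLyapunov, incrementalLyapunov, sum_sub_distrib]
    _ ≤ ∑ j ∈ range N, C ^ 2 * (dist ξ ξ' + dist ζ ζ') * (dist ξ ζ + dist ξ' ζ') :=
        (abs_sum_le_sum_abs _ _).trans (sum_le_sum fun j _ => hterm j)
    _ = _ := by rw [sum_const, card_range, nsmul_eq_mul]; ring

end lyapunov

theorem converse_lyapunov_incremental_general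
    (n : ℕ) (D : Set (EuclideanSpace ℝ (Fin n)))
    (f : ℕ → EuclideanSpace ℝ (Fin n) → EuclideanSpace ℝ (Fin n))
    (d lam : ℝ)
    (hlam : 0 < lam ∧ lam < 1)
    (hEIS : ∀ (k₀ : ℕ) (x y : ℕ → EuclideanSpace ℝ (Fin n)),
      x k₀ ∈ D → y k₀ ∈ D →
      (∀ k, k₀ ≤ k → x (k + 1) = f k (x k)) →
      (∀ k, k₀ ≤ k → y (k + 1) = f k (y k)) →
      ∀ k, k₀ ≤ k → ‖x k - y k‖ ≤ d * ‖x k₀ - y k₀‖ * lam ^ (k - k₀)) :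
    ∃ (V : ℕ → EuclideanSpace ℝ (Fin n) → EuclideanSpace ℝ (Fin n) → ℝ)
      (c₁ c₂ c₃ β : ℝ),
      0 < c₁ ∧ 0 < c₂ ∧ 0 < c₃ ∧ 0 < β ∧ β < 1 ∧
      (∀ k, ∀ ξ ∈ D, ∀ ζ ∈ D,
        c₁ * ‖ξ - ζ‖ ^ 2 ≤ V k ξ ζ ∧ V k ξ ζ ≤ c₂ * ‖ξ - ζ‖ ^ 2) ∧
      (∀ k, ∀ ξ ∈ D, ∀ ζ ∈ D, V (k + 1) (f k ξ) (f k ζ) ≤ β ^ 2 * V k ξ ζ) ∧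
      (∀ k, ∀ ξ ∈ D, ∀ ζ ∈ D, ∀ ξ' ∈ D, ∀ ζ' ∈ D,
        |V k ξ ζ - V k ξ' ζ'| ≤
          c₃ * (‖ξ - ξ'‖ + ‖ζ - ζ'‖) * (‖ξ - ζ‖ + ‖ξ' - ζ'‖)) := by
  obtain ⟨hlam0, hlam1⟩ := hlam
  simp only [← dist_eq_norm] at hEIS ⊢
  set C := max d 1
  have hstab : IsExpIncrementallyStable f D C lam :=
    IsExpIncrementallyStable.mono hEIS (le_max_left d 1) hlam0.le
  have hbound : ∀ k j, ∀ ξ ∈ D, ∀ ζ ∈ D,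
      dist (trajectory f k ξ j) (trajectory f k ζ j) ≤ C * dist ξ ζ := fun k j ξ hξ ζ hζ =>
    hstab.dist_trajectory_le_mul (by positivity) hlam0.le hlam1.le hξ hζ k j
  obtain ⟨N, hN, hCN⟩ := exists_pos_sq_mul_pow_le_half C hlam0.le hlam1
  set c : ℝ := N * C ^ 2
  have hc : 1 ≤ c :=
    one_le_mul_of_one_le_of_one_le (by exact_mod_cast hN) (one_le_pow₀ (le_max_right d 1))
  have hρ : 0 < 1 - 1 / (2 * c) := by
    rw [sub_pos, div_lt_one (by positivity)]
    linarith
  have hρ1 : 1 - 1 / (2 * c) < 1 ^ 2 := by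
    rw [one_pow, sub_lt_self_iff]
    positivity
  refine ⟨incrementalLyapunov f N, 1, c, c, √(1 - 1 / (2 * c)), one_pos, by positivity,
    by positivity, Real.sqrt_pos.2 hρ, (Real.sqrt_lt' one_pos).2 hρ1,
    fun k ξ hξ ζ hζ => ⟨by simpa using sq_dist_le_incrementalLyapunov hN,
      incrementalLyapunov_le (hbound k · ξ hξ ζ hζ)⟩,
    fun k ξ hξ ζ hζ => ?_,
    fun k ξ hξ ζ hζ ξ' hξ' ζ' hζ' => abs_incrementalLyapunov_sub_le (hbound k) hξ hζ hξ' hζ'⟩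
  rw [Real.sq_sqrt hρ.le]
  exact incrementalLyapunov_succ_map_le (by positivity)
    (incrementalLyapunov_le (hbound k · ξ hξ ζ hζ)) (hstab.sq_dist_trajectory_le_half hCN hξ hζ k)

/-- Converse Lyapunov theorem for exponential incremental stability (Theorem 6). -/
theorem converse_lyapunov_incremental
    (n : ℕ) (D : Set (EuclideanSpace ℝ (Fin n)))
    (f : ℕ → EuclideanSpace ℝ (Fin n) → EuclideanSpace ℝ (Fin n))
    (Lf d lam : ℝ)
    (hD : IsCompact D) (h0D : (0 : EuclideanSpace ℝ (Fin n)) ∈ D)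
    (hinv : ∀ k, ∀ x ∈ D, f k x ∈ D)
    (hLf : 0 < Lf)
    (hLip : ∀ k, ∀ p ∈ D, ∀ q ∈ D, ‖f k p - f k q‖ ≤ Lf * ‖p - q‖)
    (hd : 0 < d) (hlam : 0 < lam ∧ lam < 1)
    (hEIS : ∀ (k₀ : ℕ) (x y : ℕ → EuclideanSpace ℝ (Fin n)),
      x k₀ ∈ D → y k₀ ∈ D →
      (∀ k, k₀ ≤ k → x (k + 1) = f k (x k)) →
      (∀ k, k₀ ≤ k → y (k + 1) = f k (y k)) →
      ∀ k, k₀ ≤ k → ‖x k - y k‖ ≤ d * ‖x k₀ - y k₀‖ * lam ^ (k - k₀)) :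
    ∃ (V : ℕ → EuclideanSpace ℝ (Fin n) → EuclideanSpace ℝ (Fin n) → ℝ)
      (c₁ c₂ c₃ β : ℝ),
      0 < c₁ ∧ 0 < c₂ ∧ 0 < c₃ ∧ 0 < β ∧ β < 1 ∧
      (∀ k, ∀ ξ ∈ D, ∀ ζ ∈ D,
        c₁ * ‖ξ - ζ‖ ^ 2 ≤ V k ξ ζ ∧ V k ξ ζ ≤ c₂ * ‖ξ - ζ‖ ^ 2) ∧
      (∀ k, ∀ ξ ∈ D, ∀ ζ ∈ D, V (k + 1) (f k ξ) (f k ζ) ≤ β ^ 2 * V k ξ ζ) ∧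
      (∀ k, ∀ ξ ∈ D, ∀ ζ ∈ D, ∀ ξ' ∈ D, ∀ ζ' ∈ D,
        |V k ξ ζ - V k ξ' ζ'| ≤
          c₃ * (‖ξ - ξ'‖ + ‖ζ - ζ'‖) * (‖ξ - ζ‖ + ‖ξ' - ζ'‖)) :=
  converse_lyapunov_incremental_general n D f d lam hlam hEIS
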